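/- For every prime p, Σ_{k=1}^{p-1} ⌊k^9/p⌋ = (1/20)·(p-2)(p-1)(p+1)(2p^6 - 6p^5 + 5p^4 + 3p^2 - 4p + 5). -/

import Mathlib

/-!
Since `9` is odd, `k ^ 9 + (p - k) ^ 9 ≡ 0 [MOD p]`, and neither term is divisible by the prime
`p`; so the residues of `k ^ 9` and `(p - k) ^ 9` add up to exactly `p`, and the residues of
`k ^ 9` for `1 ≤ k ≤ p - 1` sum to `p (p - 1) / 2`. As `p ⌊k ^ 9 / p⌋ = k ^ 9 - (k ^ 9 % p)`, the
sum of the floors is `(∑ k ^ 9 - p (p - 1) / 2) / p`, and Faulhaber's formula for `∑ k ^ 9`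
gives the closed form.
-/

open Finset

lemma sum_Icc_pow_nine (n : ℕ) :
    ∑ k ∈ Icc 1 n, (k : ℚ) ^ 9 =
      (2 * (n : ℚ) ^ 10 + 10 * n ^ 9 + 15 * n ^ 8 - 14 * n ^ 6 + 10 * n ^ 4 - 3 * n ^ 2) / 20 := by
  induction n with
  | zero => simp
  | succ m ih =>
    rw [sum_Icc_succ_top (by omega), ih]
    push_cast
    ring

lemma Nat.mod_add_mod_eq_of_dvd_add {a b p : ℕ} (h : p ∣ a + b) (ha : ¬ p ∣ a) (hb : ¬ p ∣ b) :
    a % p + b % p = p := by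
  rcases Nat.eq_zero_or_pos p with rfl | hp
  · simp_all
  obtain ⟨c, hc⟩ : p ∣ a % p + b % p := by
    rwa [Nat.dvd_iff_mod_eq_zero, ← Nat.add_mod, ← Nat.dvd_iff_mod_eq_zero]
  have ha' : 0 < a % p := Nat.pos_of_ne_zero fun h0 => ha (Nat.dvd_of_mod_eq_zero h0)
  have hb' : 0 < b % p := Nat.pos_of_ne_zero fun h0 => hb (Nat.dvd_of_mod_eq_zero h0)
  rcases c with _ | _ | c <;> nlinarith [Nat.mod_lt a hp, Nat.mod_lt b hp]

lemma pow_mod_add_sub_pow_mod {p n k : ℕ} (hp : p.Prime) (hn : Odd n) (hk0 : 0 < k) (hkp : k < p) :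
    k ^ n % p + (p - k) ^ n % p = p := by
  have not_dvd_pow {m : ℕ} (hm0 : 0 < m) (hmp : m < p) : ¬ p ∣ m ^ n := fun h =>
    absurd (Nat.le_of_dvd hm0 (hp.dvd_of_dvd_pow h)) (by omega)
  refine Nat.mod_add_mod_eq_of_dvd_add ?_ (not_dvd_pow hk0 hkp) (not_dvd_pow (by omega) (by omega))
  simpa [Nat.add_sub_cancel' hkp.le] using hn.nat_add_dvd_pow_add_pow k (p - k)

lemma sum_Icc_pow_mod_mul_two {p n : ℕ} (hp : p.Prime) (hn : Odd n) :
    (∑ k ∈ Icc 1 (p - 1), k ^ n % p) * 2 = p * (p - 1) := by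
  have hreflect : ∑ k ∈ Icc 1 (p - 1), (p - k) ^ n % p = ∑ k ∈ Icc 1 (p - 1), k ^ n % p := by
    apply sum_nbij' (fun k => p - k) (fun k => p - k) <;> simp only [mem_Icc, implies_true] <;>
      omega
  calc (∑ k ∈ Icc 1 (p - 1), k ^ n % p) * 2
      = ∑ k ∈ Icc 1 (p - 1), (k ^ n % p + (p - k) ^ n % p) := by
        rw [sum_add_distrib, hreflect, mul_two]
    _ = ∑ _k ∈ Icc 1 (p - 1), p := sum_congr rfl fun k hk =>
        pow_mod_add_sub_pow_mod hp hn (mem_Icc.mp hk).1 (Nat.lt_of_le_pred hp.pos (mem_Icc.mp hk).2)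
    _ = p * (p - 1) := by simp [mul_comm]

lemma natCast_mul_floor_div (a p : ℕ) : (p : ℚ) * ⌊(a : ℚ) / p⌋ = a - (a % p : ℕ) := by
  rw [Rat.floor_natCast_div_natCast, ← Int.natCast_div, Int.cast_natCast, eq_sub_iff_add_eq,
    ← Nat.cast_mul, ← Nat.cast_add, Nat.div_add_mod]

lemma natCast_mul_sum_floor_pow_div {p n : ℕ} (hp : p.Prime) (hn : Odd n) :
    (p : ℚ) * ∑ k ∈ Icc 1 (p - 1), (⌊(k : ℚ) ^ n / p⌋ : ℚ) =
      ∑ k ∈ Icc 1 (p - 1), (k : ℚ) ^ n - p * (p - 1) / 2 := by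
  have hmod : (∑ k ∈ Icc 1 (p - 1), ((k ^ n % p : ℕ) : ℚ)) * 2 = p * (p - 1) := by
    rw [← Nat.cast_pred hp.pos]
    exact_mod_cast sum_Icc_pow_mod_mul_two hp hn
  have hfloor : ∀ k : ℕ, (p : ℚ) * ⌊(k : ℚ) ^ n / p⌋ = (k : ℚ) ^ n - (k ^ n % p : ℕ) := by
    intro k
    exact_mod_cast natCast_mul_floor_div (k ^ n) p
  rw [mul_sum, sum_congr rfl fun k _ => hfloor k, sum_sub_distrib]
  linarith

theorem stmt_11 (p : ℕ) (hp : p.Prime) :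
    (∑ k ∈ Finset.Icc 1 (p - 1), (⌊((k : ℚ) ^ 9) / p⌋ : ℚ)) =
      (1 / 20) * ((p : ℚ) - 2) * ((p : ℚ) - 1) * ((p : ℚ) + 1) *
        (2 * (p : ℚ) ^ 6 - 6 * (p : ℚ) ^ 5 + 5 * (p : ℚ) ^ 4 + 3 * (p : ℚ) ^ 2
          - 4 * p + 5) := by
  have h := natCast_mul_sum_floor_pow_div hp (by decide : Odd 9)
  rw [sum_Icc_pow_nine, Nat.cast_pred hp.pos] at h
  have hp0 : (p : ℚ) ≠ 0 := by exact_mod_cast hp.ne_zero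
  apply mul_left_cancel₀ hp0
  rw [h]
  ring
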